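/- arXiv:1309.7417 — 2 statements merged into one kernel-verified Lean document; each statement's English description precedes it below -/
import Mathlib

section
/- Let B ∈ 𝒩𝒮_n and 1 ≤ m ≤ n. Then B is PH-equivalent to a block matrix of the form [[I_m, X],[0, Z]] (with I_m the m×m identity, X an m×(n−m) integer matrix, Z an (n−m)×(n−m) integer matrix) if and only if there exists a subset Ω ⊆ {1,…,n} with |Ω| = m such that P_Ω(r(B)) = ℤ^{Ω}. -/
/-- An `n × n` integer matrix is weakly nonsingular if it has rank `n` and
every column is unimodular (the gcd of the entries of each column is `1`). -/
def WeaklyNonsingular {n : ℕ} (B : Matrix (Fin n) (Fin n) ℤ) : Prop :=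
  B.rank = n ∧ ∀ j : Fin n, Finset.univ.gcd (fun i => B i j) = 1

/-- The row space `r(A)` of a matrix: the subgroup (submodule) of `ℤ^{1×n}`
consisting of all `v * A`. -/
def rowSpace {m n : ℕ} (A : Matrix (Fin m) (Fin n) ℤ) : Submodule ℤ (Fin n → ℤ) :=
  LinearMap.range A.vecMulLinear

/-- The permutation matrix `P` with `P (k, π k) = 1` and zeros elsewhere. -/
def permMat {n : ℕ} (π : Equiv.Perm (Fin n)) : Matrix (Fin n) (Fin n) ℤ :=
  Matrix.of fun i j => if π i = j then 1 else 0

/-- Permutation-Hermite equivalence: `U * B * P = B'` for some `U ∈ GL(n, ℤ)`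
and permutation matrix `P`. -/
def PHEquiv {n : ℕ} (B B' : Matrix (Fin n) (Fin n) ℤ) : Prop :=
  ∃ (U : Matrix (Fin n) (Fin n) ℤ) (π : Equiv.Perm (Fin n)),
    (U.det = 1 ∨ U.det = -1) ∧ U * B * permMat π = B'

/-!
Permuting columns only relabels coordinates, and two nonsingular integer matrices with the same
row lattice differ by a unimodular left factor. So `B` has the block form after permuting columns
iff, for some `m` coordinates, the row lattice `L = r(B)` has a basis of the shape
`(e_i, x_i)` (`i < m`), `(0, z_j)`. Such a basis exists iff the projection of `L` to those
coordinates is onto: take preimages of the unit vectors and complete them by generators of the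
kernel of the projection on `L`, a lattice of rank at most `n - m`.
-/

open Function Submodule LinearMap Matrix

theorem Matrix.det_ne_zero_of_rank_eq_card {R ι : Type*} [CommRing R] [IsDomain R] [Fintype ι]
    [DecidableEq ι] {A : Matrix ι ι R} (h : A.rank = Fintype.card ι) : A.det ≠ 0 := by
  have hker : Disjoint (⊤ : Submodule R (ι → R)) (ker A.mulVecLin) :=
    disjoint_ker_of_finrank_le _ (by
      rw [Submodule.map_top, finrank_top, Module.finrank_fintype_fun_eq_card]; exact h.ge)
  rw [Ne, ← Matrix.exists_mulVec_eq_zero_iff]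
  rintro ⟨v, hv, hAv⟩
  exact hv (hker.le_bot ⟨mem_top, hAv⟩)

lemma map_funLeft_eq_top_of_range_subset {R ι α β : Type*} [Semiring R]
    {L : Submodule R (ι → R)} {f : α → ι} {g : β → ι} (hg : Injective g)
    (hgf : Set.range g ⊆ Set.range f) (hL : L.map (funLeft R R f) = ⊤) :
    L.map (funLeft R R g) = ⊤ := by
  choose h hh using fun b => hgf ⟨b, rfl⟩
  obtain rfl : g = f ∘ h := funext fun b => (hh b).symm
  rw [funLeft_comp, map_comp, hL, Submodule.map_top, range_eq_top]
  exact funLeft_surjective_of_injective _ _ _ hg.of_comp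

lemma exists_finset_card_eq_map_funLeft_eq_top {R ι α : Type*} [Semiring R] [Fintype α]
    {L : Submodule R (ι → R)} {f : α → ι} (hf : Injective f)
    (hL : L.map (funLeft R R f) = ⊤) :
    ∃ Ω : Finset ι, Ω.card = Fintype.card α ∧
      L.map (funLeft R R (Subtype.val : {x // x ∈ Ω} → ι)) = ⊤ := by
  refine ⟨Finset.univ.map ⟨f, hf⟩, by simp,
    map_funLeft_eq_top_of_range_subset Subtype.val_injective ?_ hL⟩
  rintro _ ⟨⟨x, hx⟩, rfl⟩
  obtain ⟨a, -, rfl⟩ := Finset.mem_map.1 hx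
  exact ⟨a, rfl⟩

lemma finrank_le_sub_of_le_ker_funLeft_castLE {R : Type*} [Ring R] [StrongRankCondition R]
    {n m : ℕ} (hmn : m ≤ n) {K : Submodule R (Fin n → R)}
    (hK : K ≤ ker (funLeft R R (Fin.castLE hmn))) : Module.finrank R K ≤ n - m := by
  let tail : Fin (n - m) → Fin n := fun j => ⟨m + j, by omega⟩
  have hinj : Injective (funLeft R R tail ∘ₗ K.subtype) := by
    refine (injective_iff_map_eq_zero _).2 fun x hx => Subtype.ext (funext fun i => ?_)
    by_cases hi : (i : ℕ) < m
    · exact congr_fun (hK x.2) ⟨i, hi⟩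
    · simpa [tail, show m + (i - m) = i by omega] using congr_fun hx ⟨i - m, by omega⟩
  simpa using finrank_le_finrank_of_injective hinj

lemma Submodule.exists_fin_span_eq_of_finrank_le {R M : Type*} [Ring R] [StrongRankCondition R]
    [AddCommGroup M] [Module R M] (K : Submodule R M) [Module.Free R K] [Module.Finite R K]
    {d : ℕ} (h : Module.finrank R K ≤ d) : ∃ k : Fin d → M, span R (Set.range k) = K := by
  let b := Module.finBasis R K
  refine ⟨fun j => if hj : (j : ℕ) < Module.finrank R K then b ⟨j, hj⟩ else 0,
    le_antisymm ?_ ?_⟩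
  · rw [span_le]
    rintro _ ⟨j, rfl⟩
    dsimp only
    split_ifs
    exacts [(b _).2, K.zero_mem]
  · calc K = (span R (Set.range b)).map K.subtype := by
          rw [b.span_eq, Submodule.map_top, range_subtype]
      _ = span R (Set.range (K.subtype ∘ b)) := by rw [map_span, Set.range_comp]
      _ ≤ _ := span_mono (by rintro _ ⟨i, rfl⟩; exact ⟨Fin.castLE h i, by simp⟩)

lemma rowSpace_eq_span {k n : ℕ} (A : Matrix (Fin k) (Fin n) ℤ) :
    rowSpace A = span ℤ (Set.range A) :=
  range_vecMulLinear A

lemma rowSpace_mul_le {k l n : ℕ} (U : Matrix (Fin k) (Fin l) ℤ)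
    (A : Matrix (Fin l) (Fin n) ℤ) :
    rowSpace (U * A) ≤ rowSpace A := by
  rintro _ ⟨v, rfl⟩
  exact ⟨v ᵥ* U, by simp [Matrix.vecMul_vecMul]⟩

lemma permMat_eq_permMatrix {n : ℕ} (π : Equiv.Perm (Fin n)) :
    permMat π = π.permMatrix ℤ := by
  ext i j
  simp [permMat, Equiv.Perm.permMatrix, PEquiv.toMatrix_apply, Equiv.toPEquiv_apply]

lemma rowSpace_mul_permMat {k n : ℕ} (A : Matrix (Fin k) (Fin n) ℤ) (π : Equiv.Perm (Fin n)) :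
    rowSpace (A * permMat π) = (rowSpace A).map (funLeft ℤ ℤ π.symm) := by
  rw [rowSpace, rowSpace, ← range_comp]
  congr 1
  refine LinearMap.ext fun v => ?_
  change v ᵥ* (A * permMat π) = (v ᵥ* A) ∘ π.symm
  rw [← vecMul_vecMul, permMat_eq_permMatrix, Equiv.Perm.permMatrix,
    PEquiv.vecMul_toMatrix_toPEquiv]

lemma exists_mul_eq_of_rowSpace_le {k l n : ℕ} {A : Matrix (Fin l) (Fin n) ℤ}
    {C : Matrix (Fin k) (Fin n) ℤ} (h : rowSpace C ≤ rowSpace A) :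
    ∃ U : Matrix (Fin k) (Fin l) ℤ, U * A = C := by
  choose U hU using fun i => h (by rw [rowSpace_eq_span]; exact subset_span ⟨i, rfl⟩)
  exact ⟨Matrix.of U, funext fun i => (Matrix.mul_apply_eq_vecMul _ _ i).trans (hU i)⟩

lemma exists_unimodular_mul_eq_of_rowSpace_eq {n : ℕ} {A C : Matrix (Fin n) (Fin n) ℤ}
    (hA : A.det ≠ 0) (h : rowSpace C = rowSpace A) :
    ∃ U : Matrix (Fin n) (Fin n) ℤ, (U.det = 1 ∨ U.det = -1) ∧ U * A = C := by
  obtain ⟨U, hU⟩ := exists_mul_eq_of_rowSpace_le h.le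
  obtain ⟨V, hV⟩ := exists_mul_eq_of_rowSpace_le h.ge
  have hVU : V * U = 1 := by
    refine smul_right_injective _ hA ?_
    calc A.det • (V * U) = V * U * (A * A.adjugate) := by
          rw [Matrix.mul_adjugate, Matrix.mul_smul, Matrix.mul_one]
      _ = A.det • 1 := by
          rw [← Matrix.mul_assoc, Matrix.mul_assoc V, hU, hV, Matrix.mul_adjugate]
  exact ⟨U, Int.isUnit_iff.mp (Matrix.isUnit_det_of_left_inverse hVU), hU⟩

lemma det_permMat_ne_zero {n : ℕ} (π : Equiv.Perm (Fin n)) : (permMat π).det ≠ 0 := by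
  rw [permMat_eq_permMatrix, Matrix.det_permutation]
  simp

section IdentityBlock

variable {n m : ℕ} (hmn : m ≤ n)

lemma map_funLeft_castLE_rowSpace_eq_top {C : Matrix (Fin n) (Fin n) ℤ}
    (hC : ∀ i j : Fin n, (i : ℕ) < m → (j : ℕ) < m → C i j = if i = j then 1 else 0) :
    (rowSpace C).map (funLeft ℤ ℤ (Fin.castLE hmn)) = ⊤ := by
  rw [eq_top_iff, ← (Pi.basisFun ℤ (Fin m)).span_eq, span_le]
  rintro _ ⟨a, rfl⟩
  refine ⟨C (Fin.castLE hmn a), by rw [rowSpace_eq_span]; exact subset_span ⟨_, rfl⟩, ?_⟩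
  ext b
  simp [funLeft_apply, hC, Pi.single_apply, Fin.ext_iff, eq_comm]

lemma exists_rowSpace_eq_of_map_funLeft_castLE_eq_top {L : Submodule ℤ (Fin n → ℤ)}
    (hL : L.map (funLeft ℤ ℤ (Fin.castLE hmn)) = ⊤) :
    ∃ C : Matrix (Fin n) (Fin n) ℤ, rowSpace C = L ∧
      (∀ i j : Fin n, (i : ℕ) < m → (j : ℕ) < m → C i j = if i = j then 1 else 0) ∧
      (∀ i j : Fin n, m ≤ (i : ℕ) → (j : ℕ) < m → C i j = 0) := by
  set p := funLeft ℤ ℤ (Fin.castLE hmn)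
  choose r hrL hr using fun a : Fin m => (hL ▸ mem_top : Pi.single a 1 ∈ L.map p)
  obtain ⟨k, hk⟩ := (L ⊓ ker p).exists_fin_span_eq_of_finrank_le
    (finrank_le_sub_of_le_ker_funLeft_castLE hmn inf_le_right)
  have hkK (j) : k j ∈ L ⊓ ker p := hk ▸ subset_span ⟨j, rfl⟩
  let C : Matrix (Fin n) (Fin n) ℤ :=
    Matrix.of fun i => if hi : (i : ℕ) < m then r ⟨i, hi⟩ else k ⟨i - m, by omega⟩
  have hC (i) : C i = if hi : (i : ℕ) < m then r ⟨i, hi⟩ else k ⟨i - m, by omega⟩ := rfl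
  have hrC (a) : r a ∈ rowSpace C := by
    rw [rowSpace_eq_span]; exact subset_span ⟨Fin.castLE hmn a, by simp [hC]⟩
  have hkC : L ⊓ ker p ≤ rowSpace C := by
    rw [← hk, rowSpace_eq_span, span_le]
    rintro _ ⟨j, rfl⟩
    exact subset_span ⟨⟨m + j, by omega⟩, by simp [hC]⟩
  refine ⟨C, le_antisymm ?_ fun x hx => ?_, fun i j hi hj => ?_, fun i j hi hj => ?_⟩
  · rw [rowSpace_eq_span, span_le]
    rintro _ ⟨i, rfl⟩
    by_cases hi : (i : ℕ) < m
    · simpa [hC, hi] using hrL _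
    · simpa [hC, hi] using (hkK _).1
  · have hpx : p x = ∑ a, x (Fin.castLE hmn a) • Pi.single a 1 := by
      ext b; simp [p, funLeft_apply, Pi.single_apply]
    have hK : x - ∑ a, x (Fin.castLE hmn a) • r a ∈ L ⊓ ker p :=
      ⟨L.sub_mem hx (sum_mem fun a _ => L.smul_mem _ (hrL a)), by
        rw [SetLike.mem_coe, mem_ker, map_sub, map_sum, hpx]; simp only [map_smul, hr, sub_self]⟩
    have := add_mem (hkC hK) (sum_mem fun a (_ : a ∈ Finset.univ) =>
      (rowSpace C).smul_mem (x (Fin.castLE hmn a)) (hrC a))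
    rwa [sub_add_cancel] at this
  · simpa [hC, hi, p, funLeft_apply, Pi.single_apply, Fin.ext_iff, eq_comm] using
      congr_fun (hr ⟨i, hi⟩) ⟨j, hj⟩
  · simpa [hC, not_lt.2 hi, p, funLeft_apply] using congr_fun (hkK _).2 ⟨j, hj⟩

end IdentityBlock

lemma exists_perm_castLE_mem {n m : ℕ} (hmn : m ≤ n) {Ω : Finset (Fin n)} (hΩ : Ω.card = m) :
    ∃ σ : Equiv.Perm (Fin n), ∀ a : Fin m, σ (Fin.castLE hmn a) ∈ Ω := by
  let S := Finset.univ.map (Fin.castLEEmb hmn)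
  let e : {x // x ∈ S} ≃ {x // x ∈ Ω} := Fintype.equivOfCardEq (by
    simp only [Fintype.card_coe, S, Finset.card_map, Finset.card_fin, hΩ])
  refine ⟨e.extendSubtype, fun a => ?_⟩
  rw [e.extendSubtype_apply_of_mem _ (by simp [S])]
  exact (e _).2

theorem stmt11_general {n : ℕ} (B : Matrix (Fin n) (Fin n) ℤ) (hB : WeaklyNonsingular B)
    (m : ℕ) (hmn : m ≤ n) :
    (∃ C : Matrix (Fin n) (Fin n) ℤ, PHEquiv B C ∧
        (∀ i j : Fin n, (i : ℕ) < m → (j : ℕ) < m → C i j = if i = j then 1 else 0) ∧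
        (∀ i j : Fin n, m ≤ (i : ℕ) → (j : ℕ) < m → C i j = 0))
      ↔ (∃ Ω : Finset (Fin n), Ω.card = m ∧
          Submodule.map
            (LinearMap.funLeft ℤ ℤ (Subtype.val : {x // x ∈ Ω} → Fin n))
            (rowSpace B) = ⊤) := by
  constructor
  · rintro ⟨_, ⟨U, π, -, rfl⟩, hId, -⟩
    have hle : rowSpace (U * B * permMat π) ≤ (rowSpace B).map (funLeft ℤ ℤ π.symm) := by
      rw [rowSpace_mul_permMat]; exact map_mono (rowSpace_mul_le U B)
    have hL : (rowSpace B).map (funLeft ℤ ℤ (π.symm ∘ Fin.castLE hmn)) = ⊤ := by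
      rw [funLeft_comp, map_comp]
      exact eq_top_mono (map_mono hle) (map_funLeft_castLE_rowSpace_eq_top hmn hId)
    simpa using exists_finset_card_eq_map_funLeft_eq_top
      (π.symm.injective.comp (Fin.castLE_injective hmn)) hL
  · rintro ⟨Ω, hcard, hΩ⟩
    obtain ⟨σ, hσ⟩ := exists_perm_castLE_mem hmn hcard
    have hL := map_funLeft_eq_top_of_range_subset (σ.injective.comp (Fin.castLE_injective hmn))
      (by rintro _ ⟨a, rfl⟩; exact ⟨⟨_, hσ a⟩, rfl⟩) hΩ
    rw [funLeft_comp, map_comp, ← σ.symm_symm, ← rowSpace_mul_permMat] at hL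
    obtain ⟨C, hC, hId, hZero⟩ := exists_rowSpace_eq_of_map_funLeft_castLE_eq_top hmn hL
    have hdet : (B * permMat σ.symm).det ≠ 0 := by
      rw [Matrix.det_mul]
      exact mul_ne_zero (Matrix.det_ne_zero_of_rank_eq_card (by simpa using hB.1))
        (det_permMat_ne_zero _)
    obtain ⟨U, hU, rfl⟩ := exists_unimodular_mul_eq_of_rowSpace_eq hdet hC
    exact ⟨_, ⟨U, σ.symm, hU, Matrix.mul_assoc _ _ _⟩, hId, hZero⟩

theorem stmt11 {n : ℕ} (B : Matrix (Fin n) (Fin n) ℤ) (hB : WeaklyNonsingular B)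
    (m : ℕ) (hm1 : 1 ≤ m) (hmn : m ≤ n) :
    (∃ C : Matrix (Fin n) (Fin n) ℤ, PHEquiv B C ∧
        (∀ i j : Fin n, (i : ℕ) < m → (j : ℕ) < m → C i j = if i = j then 1 else 0) ∧
        (∀ i j : Fin n, m ≤ (i : ℕ) → (j : ℕ) < m → C i j = 0))
      ↔ (∃ Ω : Finset (Fin n), Ω.card = m ∧
          Submodule.map
            (LinearMap.funLeft ℤ ℤ (Subtype.val : {x // x ∈ Ω} → Fin n))
            (rowSpace B) = ⊤) :=
  stmt11_general B hB m hmn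
end

section
/- Let n ≥ 2, let d > 1 be an integer, and let a = (a_1,…,a_{n-1}) ∈ ℤ^{n-1} with gcd{d, a_1, …, a_{n-1}} = 1. Let B be the n×n block matrix [[I_{n-1}, a],[0, d]]. Then J(B) = ℤ^{1×n}/r(B) ≅ ℤ/dℤ, and if C ∈ 𝒩𝒮_n is any matrix such that CᵀB is diagonal with strictly positive diagonal entries, then J(C) = ℤ^{1×n}/r(C) ≅ ⊕_{i=1}^{n-1} ℤ/(d/gcd(a_i,d))ℤ. -/
open Matrix

/-- The block matrix `[[I_n, a], [0, d]]` of size `n+1`. -/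
def Bcol {n : ℕ} (d : ℤ) (a : Fin n → ℤ) : Matrix (Fin (n + 1)) (Fin (n + 1)) ℤ :=
  Matrix.of fun i j =>
    if hj : j = Fin.last n then
      if hi : i = Fin.last n then d else a (i.castPred hi)
    else
      if i = j then 1 else 0


/-!
Right multiplication by a unimodular matrix does not change `J`, and `J (diagonal D) ≅ ∏ ℤ/Dᵢ`.
Since `B = diag(1, …, 1, d) * [[I, a], [0, 1]]`, this gives `J(B) ≅ ℤ/d`.

For `C`, the identity columns of `B` force the first `n` rows of `C` to be those of `diagonal m`.
The last column of `B` then gives `mₚ aₚ + cₚ d = 0` for the last-row entry `cₚ` of column `p`,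
and unimodularity of column `p` makes `mₚ` and `cₚ` coprime, so `-cₚ / mₚ` is the reduced form of
`aₚ / d`: `mₚ = d / gcd(aₚ, d)`. Hence `C = diag(D, 1) * [[I, -b], [0, 1]]ᵀ` with
`Dₚ = d / gcd(aₚ, d)`, and `J(C) ≅ ∏ ℤ/Dₚ`.
-/

section RowSpace

variable {m n : ℕ}

noncomputable def quotRowSpaceMulEquiv (A : Matrix (Fin m) (Fin n) ℤ)
    {V W : Matrix (Fin n) (Fin n) ℤ} (hVW : V * W = 1) (hWV : W * V = 1) :
    ((Fin n → ℤ) ⧸ rowSpace (A * V)) ≃ₗ[ℤ] (Fin n → ℤ) ⧸ rowSpace A :=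
  Submodule.Quotient.equiv _ _
    (LinearEquiv.ofLinearMap W.vecMulLinear V.vecMulLinear
      (LinearMap.ext fun v => by simp [vecMul_vecMul, hVW])
      (LinearMap.ext fun v => by simp [vecMul_vecMul, hWV]))
    (by
      have hcomp : W.vecMulLinear ∘ₗ (A * V).vecMulLinear = A.vecMulLinear :=
        LinearMap.ext fun v => by simp [vecMul_vecMul, Matrix.mul_assoc, hVW]
      rw [rowSpace, rowSpace, LinearEquiv.toLinearMap_ofLinearMap, ← LinearMap.range_comp, hcomp])

theorem rowSpace_diagonal (D : Fin n → ℤ) :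
    rowSpace (diagonal D) = Submodule.pi Set.univ fun i => Ideal.span {D i} := by
  ext v
  simp only [rowSpace, LinearMap.mem_range, vecMulLinear_apply, Submodule.mem_pi,
    Set.mem_univ, true_implies, Ideal.mem_span_singleton', funext_iff, vecMul_diagonal]
  exact (Classical.skolem (p := fun i a => a * D i = v i)).symm

noncomputable def quotRowSpaceDiagonalEquiv (D : Fin n → ℕ) :
    ((Fin n → ℤ) ⧸ rowSpace (diagonal fun i => (D i : ℤ))) ≃+ ((i : Fin n) → ZMod (D i)) :=
  ((Submodule.quotEquivOfEq _ _ (rowSpace_diagonal _)).trans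
    (Submodule.quotientPi _)).toAddEquiv.trans
    (AddEquiv.piCongrRight fun i => (Int.quotientSpanNatEquivZMod (D i)).toAddEquiv)

end RowSpace

def Fin.snocAddEquiv {n : ℕ} (M : Fin (n + 1) → Type*) [∀ i, AddZeroClass (M i)] :
    (M (Fin.last n) × ((i : Fin n) → M i.castSucc)) ≃+ ((i : Fin (n + 1)) → M i) where
  __ := Fin.snocEquiv M
  map_add' x y := funext <| Fin.lastCases (by simp [Fin.snocEquiv]) (by simp [Fin.snocEquiv])

def piZModSnocEquiv {n : ℕ} (D : Fin n → ℕ) (k : ℕ) :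
    ((i : Fin (n + 1)) → ZMod ((Fin.snoc D k : Fin (n + 1) → ℕ) i))
      ≃+ ZMod k × ((i : Fin n) → ZMod (D i)) :=
  (Fin.snocAddEquiv _).symm.trans <|
    AddEquiv.prodCongr (ZMod.ringEquivCongr (by simp)).toAddEquiv
      (AddEquiv.piCongrRight fun i => (ZMod.ringEquivCongr (by simp)).toAddEquiv)

theorem Int.gcd_eq_one_of_finset_gcd_eq_one {ι : Type*} {s : Finset ι} {f : ι → ℤ} {p q : ι}
    (hs : s.gcd f = 1) (hf : ∀ i ∈ s, i ≠ p → i ≠ q → f i = 0) : Int.gcd (f p) (f q) = 1 := by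
  have hdvd : ((f p).gcd (f q) : ℤ) ∣ s.gcd f := Finset.dvd_gcd fun i hi => by
    by_cases hip : i = p
    · exact hip ▸ Int.gcd_dvd_left _ _
    by_cases hiq : i = q
    · exact hiq ▸ Int.gcd_dvd_right _ _
    rw [hf i hi hip hiq]
    exact dvd_zero _
  rw [hs] at hdvd
  exact_mod_cast Int.eq_one_of_dvd_one (Int.natCast_nonneg _) hdvd

theorem eq_div_gcd_of_mul_add_mul_eq_zero {A M S : ℤ} {d : ℕ} (hd : d ≠ 0) (hM : 0 < M)
    (hMS : Int.gcd M S = 1) (h : M * A + S * d = 0) :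
    M = (d / Int.gcd A d : ℕ) ∧ S = -(A / Int.gcd A d) := by
  have hq : ((-S : ℤ) : ℚ) / (M : ℚ) = mkRat A d := by
    rw [Rat.mkRat_eq_div, div_eq_div_iff (by positivity) (by exact_mod_cast hd)]
    exact_mod_cast (by linear_combination -h : -S * d = A * M)
  have hcop : (-S).natAbs.Coprime M.natAbs := by
    rw [Int.natAbs_neg, Nat.coprime_comm]; exact hMS
  have hgcd : d.gcd A.natAbs = Int.gcd A d := by rw [Nat.gcd_comm]; rfl
  constructor
  · have := Rat.den_div_eq_of_coprime hM hcop
    rwa [hq, Rat.den_mkRat, if_neg hd, hgcd, eq_comm] at this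
  · have := Rat.num_div_eq_of_coprime hM hcop
    rw [hq, Rat.num_mkRat, if_neg hd, hgcd] at this
    omega

section Bcol

variable {n : ℕ}

@[simp]
theorem Bcol_castSucc_castSucc (d : ℤ) (a : Fin n → ℤ) (i j : Fin n) :
    Bcol d a i.castSucc j.castSucc = if i = j then 1 else 0 := by
  simp [Bcol, (Fin.castSucc_lt_last j).ne]

@[simp]
theorem Bcol_castSucc_last (d : ℤ) (a : Fin n → ℤ) (i : Fin n) :
    Bcol d a i.castSucc (Fin.last n) = a i := by
  simp [Bcol, (Fin.castSucc_lt_last i).ne]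

@[simp]
theorem Bcol_last_castSucc (d : ℤ) (a : Fin n → ℤ) (j : Fin n) :
    Bcol d a (Fin.last n) j.castSucc = 0 := by
  simp [Bcol, (Fin.castSucc_lt_last j).ne, (Fin.castSucc_lt_last j).ne']

@[simp]
theorem Bcol_last_last (d : ℤ) (a : Fin n → ℤ) : Bcol d a (Fin.last n) (Fin.last n) = d := by
  simp [Bcol]

theorem mul_Bcol_apply_castSucc {m : Type*} [Fintype m] (A : Matrix m (Fin (n + 1)) ℤ)
    (d : ℤ) (a : Fin n → ℤ) (i : m) (j : Fin n) :
    (A * Bcol d a) i j.castSucc = A i j.castSucc := by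
  simp [mul_apply, Fin.sum_univ_castSucc]

theorem mul_Bcol_apply_last {m : Type*} [Fintype m] (A : Matrix m (Fin (n + 1)) ℤ)
    (d : ℤ) (a : Fin n → ℤ) (i : m) :
    (A * Bcol d a) i (Fin.last n) = ∑ k, A i k.castSucc * a k + A i (Fin.last n) * d := by
  simp [mul_apply, Fin.sum_univ_castSucc]

theorem Bcol_one_zero : Bcol 1 (0 : Fin n → ℤ) = 1 := by
  ext i j
  induction i using Fin.lastCases <;> induction j using Fin.lastCases <;>
    simp [one_apply, (Fin.castSucc_lt_last _).ne, (Fin.castSucc_lt_last _).ne']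

theorem Bcol_one_mul_Bcol_one (a b : Fin n → ℤ) : Bcol 1 a * Bcol 1 b = Bcol 1 (a + b) := by
  ext i j
  induction j using Fin.lastCases with
  | last => induction i using Fin.lastCases <;> simp [mul_Bcol_apply_last, add_comm]
  | cast j => rw [mul_Bcol_apply_castSucc]; induction i using Fin.lastCases <;> simp

theorem Bcol_one_mul_Bcol_one_neg (a : Fin n → ℤ) : Bcol 1 a * Bcol 1 (-a) = 1 := by
  rw [Bcol_one_mul_Bcol_one, add_neg_cancel, Bcol_one_zero]

theorem Bcol_one_neg_mul_Bcol_one (a : Fin n → ℤ) : Bcol 1 (-a) * Bcol 1 a = 1 := by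
  simpa using Bcol_one_mul_Bcol_one_neg (-a)

theorem diagonal_mul_Bcol_one (d : ℕ) (a : Fin n → ℤ) :
    diagonal (fun i => ((Fin.snoc (fun _ : Fin n => 1) d : Fin (n + 1) → ℕ) i : ℤ)) * Bcol 1 a =
      Bcol d a := by
  ext i j
  induction i using Fin.lastCases <;> induction j using Fin.lastCases <;> simp

noncomputable def quotRowSpaceBcolEquiv (d : ℕ) (a : Fin n → ℤ) :
    ((Fin (n + 1) → ℤ) ⧸ rowSpace (Bcol d a)) ≃+ ZMod d :=
  (Submodule.quotEquivOfEq _ _ (by rw [diagonal_mul_Bcol_one])).toAddEquiv.trans <|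
    (quotRowSpaceMulEquiv _ (Bcol_one_mul_Bcol_one_neg a)
      (Bcol_one_neg_mul_Bcol_one a)).toAddEquiv.trans <|
    (quotRowSpaceDiagonalEquiv _).trans <| (piZModSnocEquiv _ _).trans AddEquiv.prodUnique

end Bcol

section TransposeMulBcol

variable {n d : ℕ} {a : Fin n → ℤ} {C : Matrix (Fin (n + 1)) (Fin (n + 1)) ℤ}
  {m : Fin (n + 1) → ℤ}

theorem apply_castSucc_of_transpose_mul_Bcol_eq (h : Cᵀ * Bcol d a = diagonal m)
    (k : Fin n) (j : Fin (n + 1)) : C k.castSucc j = diagonal m j k.castSucc := by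
  rw [← h, mul_Bcol_apply_castSucc, transpose_apply]

theorem sum_mul_add_mul_of_transpose_mul_Bcol_eq (h : Cᵀ * Bcol d a = diagonal m)
    (j : Fin (n + 1)) :
    ∑ k, C k.castSucc j * a k + C (Fin.last n) j * d = diagonal m j (Fin.last n) := by
  rw [← h, mul_Bcol_apply_last]
  rfl

theorem apply_last_last_of_transpose_mul_Bcol_eq
    (hC : Finset.univ.gcd (fun i => C i (Fin.last n)) = 1) (hm : 0 < m (Fin.last n))
    (h : Cᵀ * Bcol d a = diagonal m) :
    C (Fin.last n) (Fin.last n) = 1 ∧ m (Fin.last n) = d := by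
  have hcol (k : Fin n) : C k.castSucc (Fin.last n) = 0 := by
    simp [apply_castSucc_of_transpose_mul_Bcol_eq h, (Fin.castSucc_lt_last k).ne']
  have hrel : C (Fin.last n) (Fin.last n) * d = m (Fin.last n) := by
    simpa [hcol] using sum_mul_add_mul_of_transpose_mul_Bcol_eq h (Fin.last n)
  have hpos : 0 < C (Fin.last n) (Fin.last n) :=
    pos_of_mul_pos_left (hrel ▸ hm) (Int.natCast_nonneg d)
  have hunit : Int.gcd (C (Fin.last n) (Fin.last n)) (C (Fin.last n) (Fin.last n)) = 1 :=
    Int.gcd_eq_one_of_finset_gcd_eq_one (f := fun i => C i (Fin.last n)) hC fun i _ hi _ => by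
      induction i using Fin.lastCases with
      | last => exact absurd rfl hi
      | cast k => exact hcol k
  rw [Int.gcd_self] at hunit
  have hone : C (Fin.last n) (Fin.last n) = 1 := by omega
  exact ⟨hone, by rw [← hrel, hone, one_mul]⟩

theorem apply_last_castSucc_of_transpose_mul_Bcol_eq (hd : d ≠ 0) (p : Fin n)
    (hC : Finset.univ.gcd (fun i => C i p.castSucc) = 1) (hm : 0 < m p.castSucc)
    (h : Cᵀ * Bcol d a = diagonal m) :
    m p.castSucc = (d / Int.gcd (a p) d : ℕ) ∧
      C (Fin.last n) p.castSucc = -(a p / Int.gcd (a p) d) := by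
  have hcol (k : Fin n) : C k.castSucc p.castSucc = if k = p then m p.castSucc else 0 := by
    simp [apply_castSucc_of_transpose_mul_Bcol_eq h, diagonal_apply, eq_comm]
  have hrel : m p.castSucc * a p + C (Fin.last n) p.castSucc * d = 0 := by
    simpa [hcol, (Fin.castSucc_lt_last p).ne] using
      sum_mul_add_mul_of_transpose_mul_Bcol_eq h p.castSucc
  have hcop : Int.gcd (C p.castSucc p.castSucc) (C (Fin.last n) p.castSucc) = 1 :=
    Int.gcd_eq_one_of_finset_gcd_eq_one (f := fun i => C i p.castSucc) hC fun i _ hip hil => by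
      induction i using Fin.lastCases with
      | last => exact absurd rfl hil
      | cast k => simp [hcol, (Fin.castSucc_injective n).ne_iff.mp hip]
  rw [hcol, if_pos rfl] at hcop
  exact eq_div_gcd_of_mul_add_mul_eq_zero hd hm hcop hrel

theorem eq_diagonal_mul_transpose_Bcol_of_transpose_mul_Bcol_eq
    (hC : ∀ j, Finset.univ.gcd (fun i => C i j) = 1) (hm : ∀ i, 0 < m i)
    (h : Cᵀ * Bcol d a = diagonal m) :
    C = diagonal (fun i => ((Fin.snoc (fun p => d / Int.gcd (a p) d) 1 : Fin (n + 1) → ℕ) i : ℤ)) *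
      (Bcol 1 (-fun p => a p / Int.gcd (a p) d))ᵀ := by
  obtain ⟨hlast, hmd⟩ := apply_last_last_of_transpose_mul_Bcol_eq (hC _) (hm _) h
  have hd : d ≠ 0 := by
    rintro rfl
    exact (hm (Fin.last n)).ne' (by simpa using hmd)
  have hcol (p : Fin n) := apply_last_castSucc_of_transpose_mul_Bcol_eq hd p (hC _) (hm _) h
  ext i j
  induction i using Fin.lastCases with
  | last => induction j using Fin.lastCases <;> simp [hlast, hcol]
  | cast i =>
    induction j using Fin.lastCases with
    | last => simp [apply_castSucc_of_transpose_mul_Bcol_eq h, (Fin.castSucc_lt_last i).ne']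
    | cast j =>
      rw [apply_castSucc_of_transpose_mul_Bcol_eq h]
      by_cases hij : i = j
      · simp [hij, hcol]
      · simp [Ne.symm hij]

end TransposeMulBcol

noncomputable def quotRowSpaceDiagonalMulTransposeBcolEquiv {n : ℕ} (D : Fin n → ℕ)
    (b : Fin n → ℤ) :
    ((Fin (n + 1) → ℤ) ⧸
        rowSpace (diagonal (fun i => ((Fin.snoc D 1 : Fin (n + 1) → ℕ) i : ℤ)) * (Bcol 1 b)ᵀ))
      ≃+ ((i : Fin n) → ZMod (D i)) :=
  (quotRowSpaceMulEquiv _ (W := (Bcol 1 (-b))ᵀ)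
      (by rw [← transpose_mul, Bcol_one_neg_mul_Bcol_one, transpose_one])
      (by rw [← transpose_mul, Bcol_one_mul_Bcol_one_neg, transpose_one])).toAddEquiv.trans <|
    (quotRowSpaceDiagonalEquiv _).trans <| (piZModSnocEquiv _ _).trans AddEquiv.uniqueProd

theorem stmt14_general {n : ℕ} (d : ℕ) (a : Fin n → ℤ) :
    Nonempty (((Fin (n + 1) → ℤ) ⧸ rowSpace (Bcol (d : ℤ) a)) ≃+ ZMod d) ∧
    ∀ C : Matrix (Fin (n + 1)) (Fin (n + 1)) ℤ, WeaklyNonsingular C →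
      (∃ m : Fin (n + 1) → ℤ, (∀ i, 0 < m i) ∧ Cᵀ * Bcol (d : ℤ) a = Matrix.diagonal m) →
      Nonempty (((Fin (n + 1) → ℤ) ⧸ rowSpace C)
        ≃+ ((i : Fin n) → ZMod (d / Int.gcd (a i) (d : ℤ)))) := by
  refine ⟨⟨quotRowSpaceBcolEquiv d a⟩, ?_⟩
  rintro C ⟨-, hC⟩ ⟨m, hm, h⟩
  rw [eq_diagonal_mul_transpose_Bcol_of_transpose_mul_Bcol_eq hC hm h]
  exact ⟨quotRowSpaceDiagonalMulTransposeBcolEquiv _ _⟩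

theorem stmt14 {n : ℕ} (hn : 1 ≤ n) (d : ℕ) (hd : 1 < d) (a : Fin n → ℤ)
    (hgcd : Int.gcd (d : ℤ) (Finset.univ.gcd a) = 1) :
    Nonempty (((Fin (n + 1) → ℤ) ⧸ rowSpace (Bcol (d : ℤ) a)) ≃+ ZMod d) ∧
    ∀ C : Matrix (Fin (n + 1)) (Fin (n + 1)) ℤ, WeaklyNonsingular C →
      (∃ m : Fin (n + 1) → ℤ, (∀ i, 0 < m i) ∧ Cᵀ * Bcol (d : ℤ) a = Matrix.diagonal m) →
      Nonempty (((Fin (n + 1) → ℤ) ⧸ rowSpace C)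
        ≃+ ((i : Fin n) → ZMod (d / Int.gcd (a i) (d : ℤ)))) :=
  stmt14_general d a
end
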